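/- If F is a family of permutations of [n] with φ_F(m) ≤ ⌊m/2⌋ for some fixed m ≤ n, then |F| is bounded by a constant depending only on m (independent of n); in particular |F| ≤ ⌊m/2⌋. -/

import Mathlib

/-- The pair `p = (p₁, p₂)` with `p₁ < p₂` is an inversion of `σ` if `σ⁻¹ p₂ < σ⁻¹ p₁`. -/
def isInv {n : ℕ} (σ : Equiv.Perm (Fin n)) (p : Fin n × Fin n) : Prop :=
  p.1 < p.2 ∧ σ⁻¹ p.2 < σ⁻¹ p.1

/-- Lexicographic order on pairs. -/
def lexLE {n : ℕ} (p q : Fin n × Fin n) : Prop :=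
  p.1 < q.1 ∨ (p.1 = q.1 ∧ p.2 ≤ q.2)

/-- `p` is the distinguishing pair of the distinct permutations `σ, τ`: the
lexicographically smallest pair that is an inversion of exactly one of them. -/
def isDistPair {n : ℕ} (σ τ : Equiv.Perm (Fin n)) (p : Fin n × Fin n) : Prop :=
  p.1 < p.2 ∧ ¬ (isInv σ p ↔ isInv τ p) ∧
    ∀ q : Fin n × Fin n, q.1 < q.2 → ¬ (isInv σ q ↔ isInv τ q) → lexLE p q

open Classical in
/-- `I_F`: the set of distinguishing pairs of pairs of distinct permutations of `F`. -/
noncomputable def distPairs {n : ℕ} (F : Finset (Equiv.Perm (Fin n))) :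
    Finset (Fin n × Fin n) :=
  Finset.univ.filter (fun p => ∃ σ ∈ F, ∃ τ ∈ F, σ ≠ τ ∧ isDistPair σ τ p)

open Classical in
/-- `R(σ)`: the elements of `I_F` that are inversions of `σ`. -/
noncomputable def invSet {n : ℕ} (F : Finset (Equiv.Perm (Fin n)))
    (σ : Equiv.Perm (Fin n)) : Finset (Fin n × Fin n) :=
  (distPairs F).filter (fun p => isInv σ p)

/-- The restriction of `σ` to `X`, encoded as the induced order relation on `X`. -/
def restrictMap {n : ℕ} (X : Finset (Fin n)) (σ : Equiv.Perm (Fin n)) :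
    Fin n → Fin n → Prop :=
  fun u v => u ∈ X ∧ v ∈ X ∧ σ⁻¹ u < σ⁻¹ v

/-! If `|F| > ⌊m/2⌋`, pick `⌊m/2⌋ + 1` permutations of `F`. By Bondy's theorem some `⌊m/2⌋`
pairs `(u, v)` already tell them apart by the relative order of `u` and `v`. These pairs involve
at most `m` points; on any `m`-set `X` containing them the chosen permutations have pairwise
distinct restrictions, so `φ_F(m) > ⌊m/2⌋`. -/

theorem Equiv.Perm.eq_of_forall_lt_iff_lt {α : Type*} [LinearOrder α] [Finite α]
    {σ τ : Equiv.Perm α} (h : ∀ u v, σ u < σ v ↔ τ u < τ v) : σ = τ := by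
  have hmono : StrictMono ⇑(σ * τ⁻¹) := fun a b hab => by
    simpa using (h (τ⁻¹ a) (τ⁻¹ b)).2 (by simpa using hab)
  exact Equiv.ext fun x => by simpa using congrFun hmono.eq_id (τ x)

/-- Bondy's theorem. -/
theorem exists_separating_finset_card_lt {α ι : Type*} (t : ι → α → Prop) (G : Finset α)
    (hG : G.Nonempty) (hsep : ∀ a ∈ G, ∀ b ∈ G, a ≠ b → ∃ i, ¬(t i a ↔ t i b)) :
    ∃ S : Finset ι, S.card < G.card ∧ ∀ a ∈ G, ∀ b ∈ G, a ≠ b → ∃ i ∈ S, ¬(t i a ↔ t i b) := by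
  classical
  induction G using Finset.strongInduction with
  | H G ih =>
  by_cases hsingle : ∀ a ∈ G, ∀ b ∈ G, a = b
  · exact ⟨∅, by simpa using hG.card_pos, fun a ha b hb hab => (hab (hsingle a ha b hb)).elim⟩
  push Not at hsingle
  obtain ⟨a, ha, b, hb, hab⟩ := hsingle
  obtain ⟨i, hi⟩ := hsep a ha b hb hab
  have hsplit : ∀ (P : α → Prop) [DecidablePred P], (P a ∨ P b) → (¬P a ∨ ¬P b) →
      ∃ S : Finset ι, S.card < (G.filter P).card ∧
        ∀ x ∈ G.filter P, ∀ y ∈ G.filter P, x ≠ y → ∃ j ∈ S, ¬(t j x ↔ t j y) := by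
    intro P _ hP hnP
    have hne : (G.filter P).Nonempty := by
      rcases hP with h | h
      exacts [⟨a, Finset.mem_filter.2 ⟨ha, h⟩⟩, ⟨b, Finset.mem_filter.2 ⟨hb, h⟩⟩]
    have hssub : G.filter P ⊂ G := Finset.filter_ssubset.2 <| by
      rcases hnP with h | h
      exacts [⟨a, ha, h⟩, ⟨b, hb, h⟩]
    exact ih _ hssub hne fun x hx y hy => hsep x (Finset.mem_of_mem_filter x hx)
      y (Finset.mem_of_mem_filter y hy)
  obtain ⟨S₁, hS₁, hsep₁⟩ := hsplit (t i) (by tauto) (by tauto)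
  obtain ⟨S₂, hS₂, hsep₂⟩ := hsplit (fun x => ¬t i x) (by tauto) (by tauto)
  refine ⟨insert i (S₁ ∪ S₂), ?_, fun x hx y hy hxy => ?_⟩
  · have hcard := Finset.card_filter_add_card_filter_not (s := G) (p := t i)
    have := Finset.card_insert_le i (S₁ ∪ S₂)
    have := Finset.card_union_le S₁ S₂
    omega
  by_cases hx' : t i x <;> by_cases hy' : t i y
  · obtain ⟨j, hj, hjxy⟩ := hsep₁ x (Finset.mem_filter.2 ⟨hx, hx'⟩) y
      (Finset.mem_filter.2 ⟨hy, hy'⟩) hxy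
    exact ⟨j, Finset.mem_insert_of_mem (Finset.mem_union_left _ hj), hjxy⟩
  · exact ⟨i, Finset.mem_insert_self _ _, by tauto⟩
  · exact ⟨i, Finset.mem_insert_self _ _, by tauto⟩
  · obtain ⟨j, hj, hjxy⟩ := hsep₂ x (Finset.mem_filter.2 ⟨hx, hx'⟩) y
      (Finset.mem_filter.2 ⟨hy, hy'⟩) hxy
    exact ⟨j, Finset.mem_insert_of_mem (Finset.mem_union_right _ hj), hjxy⟩

theorem Finset.card_image_fst_union_image_snd_le {α : Type*} [DecidableEq α]
    (S : Finset (α × α)) : (S.image Prod.fst ∪ S.image Prod.snd).card ≤ 2 * S.card := by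
  have := Finset.card_union_le (S.image Prod.fst) (S.image Prod.snd)
  have := S.card_image_le (f := Prod.fst)
  have := S.card_image_le (f := Prod.snd)
  omega

theorem injOn_restrictMap {n : ℕ} {G : Finset (Equiv.Perm (Fin n))} {S : Finset (Fin n × Fin n)}
    {X : Finset (Fin n)} (hSX : ∀ p ∈ S, p.1 ∈ X ∧ p.2 ∈ X)
    (hsep : ∀ σ ∈ G, ∀ τ ∈ G, σ ≠ τ → ∃ p ∈ S, ¬(σ⁻¹ p.1 < σ⁻¹ p.2 ↔ τ⁻¹ p.1 < τ⁻¹ p.2)) :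
    Set.InjOn (restrictMap X) G := by
  intro σ hσ τ hτ hστ
  by_contra hne
  obtain ⟨p, hp, hdiff⟩ := hsep σ hσ τ hτ hne
  have := congrFun (congrFun hστ p.1) p.2
  simp only [restrictMap, hSX p hp, true_and, eq_iff_iff] at this
  exact hdiff this

open Classical in
/-- If φ_F(m) ≤ ⌊m/2⌋ for some m ≤ n, then |F| ≤ ⌊m/2⌋. -/
theorem stmt18 (n m : ℕ) (hmn : m ≤ n) (F : Finset (Equiv.Perm (Fin n)))
    (h : ∀ X : Finset (Fin n), X.card = m → (F.image (restrictMap X)).card ≤ m / 2) :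
    F.card ≤ m / 2 := by
  by_contra! hF
  obtain ⟨G, hGF, hG⟩ := Finset.exists_subset_card_eq (Nat.succ_le_of_lt hF)
  obtain ⟨S, hS, hsep⟩ := exists_separating_finset_card_lt
    (fun (p : Fin n × Fin n) (σ : Equiv.Perm (Fin n)) => σ⁻¹ p.1 < σ⁻¹ p.2) G
    (Finset.card_pos.1 (by omega)) fun σ _ τ _ hστ => by
      by_contra! hsame
      exact hστ (inv_inj.1 (Equiv.Perm.eq_of_forall_lt_iff_lt fun u v => hsame (u, v)))
  set V := S.image Prod.fst ∪ S.image Prod.snd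
  have hV : V.card ≤ m := S.card_image_fst_union_image_snd_le.trans (by omega)
  obtain ⟨X, hVX, hX⟩ := Finset.exists_superset_card_eq hV (by simpa using hmn)
  have hinj : Set.InjOn (restrictMap X) G := injOn_restrictMap (fun p hp =>
    ⟨hVX (Finset.mem_union_left _ (Finset.mem_image_of_mem _ hp)),
      hVX (Finset.mem_union_right _ (Finset.mem_image_of_mem _ hp))⟩) hsep
  have := Finset.card_le_card (Finset.image_subset_image (f := restrictMap X) hGF)
  rw [Finset.card_image_of_injOn hinj] at this
  have := h X hX
  omega
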